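/- arXiv:1012.4047 — 3 statements merged into one kernel-verified Lean document; each statement's English description precedes it below -/
import Mathlib

section
/- Let b be a nonnegative even integer and let k be a positive integer. Then E_{4k+b} - E_b ≡ 4k(7(b+1)^2 - 18 + 12k(b + 1 + 4((-1)^{b/2} - k))) (mod 2^{9}). -/
/-- The Euler numbers `E n`, defined by `E 0 = 1`, `E (2n-1) = 0` for `n ≥ 1`,
and `∑_{r=0}^{n} C(2n, 2r) * E (2r) = 0` for `n ≥ 1`. -/
def eulerE : ℕ → ℤ
  | 0 => 1
  | 1 => 0
  | n + 2 =>
      if Even n then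
        -∑ r ∈ (Finset.range (n / 2 + 1)).attach,
          ((n + 2).choose (2 * r.1) : ℤ) * eulerE (2 * r.1)
      else 0
  decreasing_by
    have := r.2
    simp only [Finset.mem_range] at this
    omega

/-!
Modulo 2^9 the Euler numbers are given by a polynomial in binomial coefficients:
`E_{2n} ≡ F(n)` with `F(n) = 1 - 2·C(2n,2) + 16·C(2n,4) + 240·C(2n,6) + 256·C(2n,8)`.
Indeed, modulo 2^9 the recurrence `∑_{r ≤ N} C(2N,2r) a_r ≡ 0` (for `N ≥ 1`) determines a
sequence from `a_0`, and `F` satisfies it: for `N ≥ 9` because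
`∑_{r ≤ N} C(2N,2r) C(2r,j) = C(2N,j) 2^(2N-1-j)`, for `N ≤ 8` by direct computation.

It remains to evaluate `F(m + 2k) - F(m)` modulo 2^9, by induction on `k`. The step
`F(M+2) - F(M) ≡ 112 M^2 + 208 M - 188 + 192 (-1)^M` holds because the difference of the two
sides has ninth forward difference `2^9 · 192 · (-1)^M`, and is divisible by 2^9 for `M ≤ 8`.
-/

open Finset fwdDiff

section ForwardDifference

variable {R : Type*} [Ring R]

theorem dvd_of_dvd_fwdDiff_iter {q : R} {d : ℕ} {f : ℕ → R}
    (hdiff : ∀ M, q ∣ Δ_[1] ^[d] f M) (hinit : ∀ i < d, q ∣ f i) (M : ℕ) : q ∣ f M := by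
  induction d generalizing f M with
  | zero => exact hdiff M
  | succ d ih =>
    have hstep : ∀ M, q ∣ Δ_[1] f M := fun M => ih (f := Δ_[1] f) hdiff
      (fun i hi => dvd_sub (hinit (i + 1) (by omega)) (hinit i (by omega))) M
    induction M with
    | zero => exact hinit 0 d.succ_pos
    | succ M ihM => simpa [fwdDiff] using dvd_add ihM (hstep M)

theorem fwdDiff_iter_sub {M G : Type*} [AddCommMonoid M] [AddCommGroup G] (h : M)
    (f g : M → G) (n : ℕ) : Δ_[h] ^[n] (f - g) = Δ_[h] ^[n] f - Δ_[h] ^[n] g := by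
  rw [sub_eq_add_neg, ← neg_one_zsmul g, fwdDiff_iter_add, fwdDiff_iter_const_smul, neg_one_zsmul,
    sub_eq_add_neg]

theorem fwdDiff_iter_neg_one_pow (n : ℕ) :
    Δ_[1] ^[n] (fun M : ℕ => (-1 : R) ^ M) = fun M => (-2) ^ n * (-1) ^ M := by
  induction n with
  | zero => simp
  | succ n ih =>
    rw [Function.iterate_succ_apply', ih]
    funext M
    simp only [fwdDiff, pow_succ]
    noncomm_ring

theorem fwdDiff_iter_comp_natCast (g : R → R) (n : ℕ) :
    Δ_[1] ^[n] (fun M : ℕ => g M) = fun M : ℕ => Δ_[1] ^[n] g (M : R) := by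
  induction n generalizing g with
  | zero => rfl
  | succ n ih =>
    rw [Function.iterate_succ_apply, Function.iterate_succ_apply, ← ih]
    congr 1
    funext M
    simp [fwdDiff]

end ForwardDifference

theorem fwdDiff_choose_mul_add (a c j : ℕ) :
    Δ_[1] (fun M : ℕ => ((a * M + c).choose (j + 1) : ℤ)) =
      ∑ i ∈ range a, fun M : ℕ => ((a * M + (c + i)).choose j : ℤ) := by
  funext M
  simp only [fwdDiff, Finset.sum_apply]
  rw [show a * (M + 1) + c = a * M + c + a by ring]
  have := sum_range_sub (fun i => ((a * M + c + i).choose (j + 1) : ℤ)) a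
  simp only [← add_assoc, Nat.add_zero] at this ⊢
  rw [← this]
  refine sum_congr rfl fun i _ => ?_
  rw [Nat.choose_succ_succ', Nat.cast_add, add_sub_cancel_right]

theorem fwdDiff_iter_choose_mul_add_eq_zero {j n : ℕ} (h : j < n) (a c : ℕ) :
    Δ_[1] ^[n] (fun M : ℕ => ((a * M + c).choose j : ℤ)) = 0 := by
  induction j generalizing n c with
  | zero =>
    obtain ⟨n, rfl⟩ := Nat.exists_eq_succ_of_ne_zero h.ne'
    rw [Function.iterate_succ_apply]
    simp only [Nat.choose_zero_right, Nat.cast_one, fwdDiff_const]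
    exact Function.iterate_fixed (fwdDiff_const 1 (0 : ℤ)) n
  | succ j ih =>
    obtain ⟨n, rfl⟩ := Nat.exists_eq_succ_of_ne_zero (Nat.ne_zero_of_lt h)
    rw [Function.iterate_succ_apply, fwdDiff_choose_mul_add, fwdDiff_iter_finsetSum]
    exact sum_eq_zero fun i _ => ih (by omega) _

theorem fwdDiff_iter_sum_mul_choose_mul_add_eq_zero {d n : ℕ} (h : d ≤ n) (v : ℕ → ℤ)
    (a c : ℕ) :
    Δ_[1] ^[n] (fun M : ℕ => ∑ j ∈ range d, v j * ((a * M + c).choose j : ℤ)) = 0 := by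
  have hsum : (fun M : ℕ => ∑ j ∈ range d, v j * ((a * M + c).choose j : ℤ)) =
      ∑ j ∈ range d, v j • fun M : ℕ => ((a * M + c).choose j : ℤ) := by
    funext M
    simp only [Finset.sum_apply, Pi.smul_apply, smul_eq_mul]
  rw [hsum, fwdDiff_iter_finsetSum]
  refine sum_eq_zero fun j hj => ?_
  rw [fwdDiff_iter_const_smul, fwdDiff_iter_choose_mul_add_eq_zero (by rw [mem_range] at hj; omega),
    smul_zero]

theorem sum_choose_mul_choose_mul_pow {R : Type*} [CommSemiring R] (x : R) {n j : ℕ}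
    (hj : j ≤ n) :
    ∑ s ∈ range (n + 1), (n.choose s * s.choose j : R) * x ^ s =
      n.choose j * x ^ j * (1 + x) ^ (n - j) := by
  obtain ⟨d, rfl⟩ := Nat.exists_eq_add_of_le hj
  have hlow : ∑ s ∈ range j, (((j + d).choose s * s.choose j : ℕ) : R) * x ^ s = 0 :=
    sum_eq_zero fun s hs => by simp [Nat.choose_eq_zero_of_lt (mem_range.mp hs)]
  rw [show j + d + 1 = j + (d + 1) by ring, sum_range_add, Nat.add_sub_cancel_left, add_comm 1 x,
    add_pow, mul_sum]
  push_cast at hlow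
  rw [hlow, zero_add]
  refine sum_congr rfl fun t ht => ?_
  have hchoose := Nat.choose_mul (n := j + d) (k := j + t) (s := j) (Nat.le_add_right j t)
  rw [Nat.add_sub_cancel_left, Nat.add_sub_cancel_left] at hchoose
  rw [← Nat.cast_mul, hchoose]
  push_cast
  ring

theorem sum_range_two_mul_add_one_of_odd_eq_zero {M : Type*} [AddCommMonoid M] {g : ℕ → M}
    (hg : ∀ r, g (2 * r + 1) = 0) (N : ℕ) :
    ∑ s ∈ range (2 * N + 1), g s = ∑ r ∈ range (N + 1), g (2 * r) := by
  induction N with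
  | zero => simp
  | succ N ih =>
    rw [show 2 * (N + 1) + 1 = 2 * N + 1 + 1 + 1 by ring, sum_range_succ, sum_range_succ, ih, hg,
      sum_range_succ _ (N + 1), add_zero]
    rfl

theorem sum_choose_two_mul_mul_choose {N j : ℕ} (hj : j < 2 * N) :
    ∑ r ∈ range (N + 1), ((2 * N).choose (2 * r) * (2 * r).choose j : ℤ) =
      (2 * N).choose j * 2 ^ (2 * N - 1 - j) := by
  obtain ⟨d, hd⟩ : ∃ d, 2 * N - j = d + 1 := ⟨2 * N - j - 1, by omega⟩
  have hplus := sum_choose_mul_choose_mul_pow (1 : ℤ) hj.le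
  have hminus := sum_choose_mul_choose_mul_pow (-1 : ℤ) hj.le
  rw [hd] at hplus hminus
  rw [show 2 * N - 1 - j = d by omega]
  have hodd : ∀ r, ((2 * N).choose (2 * r + 1) * (2 * r + 1).choose j : ℤ) *
      (1 ^ (2 * r + 1) + (-1) ^ (2 * r + 1)) = 0 := fun r => by simp [pow_succ, pow_mul]
  refine mul_left_cancel₀ (two_ne_zero (α := ℤ)) ?_
  calc 2 * ∑ r ∈ range (N + 1), ((2 * N).choose (2 * r) * (2 * r).choose j : ℤ)
      = ∑ s ∈ range (2 * N + 1), ((2 * N).choose s * s.choose j : ℤ) * (1 ^ s + (-1) ^ s) := by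
        rw [sum_range_two_mul_add_one_of_odd_eq_zero hodd, mul_sum]
        exact sum_congr rfl fun r _ => by rw [one_pow, pow_mul, neg_one_sq, one_pow]; ring
    _ = (2 * N).choose j * 1 ^ j * (1 + 1) ^ (d + 1)
          + (2 * N).choose j * (-1) ^ j * (1 + -1) ^ (d + 1) := by
        simp only [mul_add, sum_add_distrib, hplus, hminus]
    _ = 2 * ((2 * N).choose j * 2 ^ d) := by rw [add_neg_cancel, zero_pow d.succ_ne_zero]; ring

theorem sum_choose_mul_eulerE (N : ℕ) :
    ∑ r ∈ range (N + 2), ((2 * N + 2).choose (2 * r) : ℤ) * eulerE (2 * r) = 0 := by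
  rw [sum_range_succ, show 2 * (N + 1) = 2 * N + 2 by ring, Nat.choose_self, Nat.cast_one, one_mul,
    eulerE, if_pos (even_two_mul N), Nat.mul_div_cancel_left N two_pos,
    sum_attach (range (N + 1)) fun r => ((2 * N + 2).choose (2 * r) : ℤ) * eulerE (2 * r),
    add_neg_cancel]

theorem modEq_of_sum_choose_two_mul_dvd {q : ℤ} {a b : ℕ → ℤ} (h0 : a 0 ≡ b 0 [ZMOD q])
    (ha : ∀ N, q ∣ ∑ r ∈ range (N + 2), ((2 * N + 2).choose (2 * r) : ℤ) * a r)
    (hb : ∀ N, q ∣ ∑ r ∈ range (N + 2), ((2 * N + 2).choose (2 * r) : ℤ) * b r) (n : ℕ) :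
    a n ≡ b n [ZMOD q] := by
  induction n using Nat.strong_induction_on with
  | _ n ih =>
    rcases n with _ | N
    · exact h0
    · have hlow : q ∣ ∑ r ∈ range (N + 1), ((2 * N + 2).choose (2 * r) : ℤ) * (b r - a r) :=
        dvd_sum fun r hr => ((ih r (by simpa using hr)).dvd).mul_left _
      have hsum := dvd_sub (hb N) (ha N)
      rw [← sum_sub_distrib, sum_range_succ, show 2 * (N + 1) = 2 * N + 2 by ring,
        Nat.choose_self, Nat.cast_one, one_mul, one_mul] at hsum
      simp only [← mul_sub] at hsum
      exact Int.modEq_iff_dvd.mpr ((dvd_add_right hlow).mp hsum)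

def eulerCoeff : ℕ → ℤ
  | 0 => 1
  | 2 => -2
  | 4 => 16
  | 6 => 240
  | 8 => 256
  | _ => 0

def eulerPoly (n : ℕ) : ℤ := ∑ j ∈ range 9, eulerCoeff j * (2 * n).choose j

theorem dvd_sum_choose_mul_eulerPoly (N : ℕ) :
    (2 ^ 9 : ℤ) ∣ ∑ r ∈ range (N + 2), ((2 * N + 2).choose (2 * r) : ℤ) * eulerPoly r := by
  rcases lt_or_ge N 8 with hN | hN
  · interval_cases N <;> decide
  · have hswap : ∑ r ∈ range (N + 2), ((2 * N + 2).choose (2 * r) : ℤ) * eulerPoly r =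
        ∑ j ∈ range 9, eulerCoeff j *
          ∑ r ∈ range (N + 2), ((2 * (N + 1)).choose (2 * r) * (2 * r).choose j : ℤ) := by
      simp only [eulerPoly, mul_sum]
      rw [sum_comm]
      exact sum_congr rfl fun j _ => sum_congr rfl fun r _ => by ring_nf
    rw [hswap]
    refine dvd_sum fun j hj => Dvd.dvd.mul_left ?_ _
    have hj : j < 9 := mem_range.mp hj
    rw [sum_choose_two_mul_mul_choose (by omega)]
    exact (pow_dvd_pow 2 (by omega)).mul_left _

theorem eulerE_two_mul_modEq_eulerPoly (n : ℕ) : eulerE (2 * n) ≡ eulerPoly n [ZMOD 2 ^ 9] :=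
  modEq_of_sum_choose_two_mul_dvd (by rw [Nat.mul_zero, eulerE]; decide)
    (fun N => (sum_choose_mul_eulerE N).symm ▸ dvd_zero _) dvd_sum_choose_mul_eulerPoly n

theorem eulerPoly_add_two_sub_modEq (M : ℕ) :
    eulerPoly (M + 2) - eulerPoly M ≡ 112 * (M : ℤ) ^ 2 + 208 * M - 188 + 192 * (-1) ^ M
      [ZMOD 2 ^ 9] := by
  set p : ℤ → ℤ := fun r => 112 * r ^ 2 + 208 * r - 188
  set f : ℕ → ℤ := fun M => eulerPoly (M + 2) - eulerPoly M - (p M + 192 * (-1) ^ M) with hf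
  have hdecomp : f = (fun M => eulerPoly (M + 2)) - eulerPoly - ((fun M : ℕ => p M) +
      (192 : ℤ) • fun M : ℕ => (-1 : ℤ) ^ M) := by
    funext M
    simp only [hf, Pi.sub_apply, Pi.add_apply, Pi.smul_apply, smul_eq_mul]
  have heulerPoly : Δ_[1] ^[9] (eulerPoly : ℕ → ℤ) = 0 :=
    fwdDiff_iter_sum_mul_choose_mul_add_eq_zero le_rfl eulerCoeff 2 0
  have hp : Δ_[1] ^[9] p = 0 := by
    have : p = (112 * Polynomial.X ^ 2 + 208 * Polynomial.X - 188 : Polynomial ℤ).eval := by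
      funext r; simp [p]
    rw [this]
    exact Polynomial.fwdDiff_iter_eq_zero_of_degree_lt (by compute_degree!)
  have hdiff : ∀ M, (2 ^ 9 : ℤ) ∣ Δ_[1] ^[9] f M := fun M => by
    rw [hdecomp, fwdDiff_iter_sub, fwdDiff_iter_sub, fwdDiff_iter_add, fwdDiff_iter_const_smul,
      fwdDiff_iter_comp_natCast, hp, fwdDiff_iter_neg_one_pow]
    simp only [Pi.sub_apply, Pi.add_apply, Pi.smul_apply, smul_eq_mul, fwdDiff_iter_comp_add,
      heulerPoly, Pi.zero_apply]
    exact ⟨192 * (-1) ^ M, by ring⟩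
  have hinit : ∀ i < 9, (2 ^ 9 : ℤ) ∣ f i := by decide
  exact (Int.modEq_iff_dvd.mpr (dvd_of_dvd_fwdDiff_iter hdiff hinit M)).symm

theorem four_dvd_two_mul_add_one_add_three_mul_neg_one_pow (m : ℕ) :
    (4 : ℤ) ∣ 2 * m + 1 + 3 * (-1) ^ m := by
  rcases Nat.even_or_odd' m with ⟨t, rfl | rfl⟩
  · exact ⟨t + 1, by push_cast; rw [pow_mul, neg_one_sq, one_pow]; ring⟩
  · exact ⟨t, by push_cast; rw [pow_succ, pow_mul, neg_one_sq, one_pow]; ring⟩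

theorem eulerPoly_add_two_mul_sub_modEq (m k : ℕ) :
    eulerPoly (m + 2 * k) - eulerPoly m ≡
      4 * k * (7 * (2 * (m : ℤ) + 1) ^ 2 - 18 + 12 * k * (2 * m + 1 + 4 * ((-1) ^ m - k)))
      [ZMOD 2 ^ 9] := by
  induction k with
  | zero => simp
  | succ k ih =>
    have hstep := eulerPoly_add_two_sub_modEq (m + 2 * k)
    rw [pow_add, pow_mul, neg_one_sq, one_pow, mul_one] at hstep
    obtain ⟨t, ht⟩ := four_dvd_two_mul_add_one_add_three_mul_neg_one_pow m
    have hsum := ih.add hstep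
    rw [sub_add_sub_cancel', show m + 2 * k + 2 = m + 2 * (k + 1) by ring] at hsum
    refine hsum.trans (Int.modEq_iff_dvd.mpr ⟨k * t - k * m - 2 * k ^ 2 - 2 * k, ?_⟩)
    push_cast
    linear_combination 128 * k * ht

theorem stern_ext_m_eq_two_general (b k : ℕ) (hb : Even b) :
    eulerE (4 * k + b) - eulerE b ≡
      4 * k * (7 * ((b : ℤ) + 1) ^ 2 - 18
        + 12 * k * ((b : ℤ) + 1 + 4 * ((-1) ^ (b / 2) - k))) [ZMOD 2 ^ 9] := by
  obtain ⟨m, rfl⟩ := hb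
  rw [← two_mul, Nat.mul_div_cancel_left m two_pos, show 4 * k + 2 * m = 2 * (m + 2 * k) by ring]
  have h := ((eulerE_two_mul_modEq_eulerPoly (m + 2 * k)).sub
    (eulerE_two_mul_modEq_eulerPoly m)).trans (eulerPoly_add_two_mul_sub_modEq m k)
  push_cast
  exact h

theorem stern_ext_m_eq_two (b k : ℕ) (hb : Even b) (hk : 0 < k) :
    eulerE (4 * k + b) - eulerE b ≡
      4 * k * (7 * ((b : ℤ) + 1) ^ 2 - 18
        + 12 * k * ((b : ℤ) + 1 + 4 * ((-1) ^ (b / 2) - k))) [ZMOD 2 ^ 9] :=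
  stern_ext_m_eq_two_general b k hb
end

section
/- (Stern's congruence) Let b be a nonnegative even integer and let k and m be positive integers. Then E_{2^m k + b} ≡ E_b + 2^m k (mod 2^{m+1}). -/
/-!
With `E(t) = ∑ Eₙ tⁿ / n! = 1 / cosh t`, the recurrence says `(eᵗ + e⁻ᵗ) E(t) = 2`; multiplied
by `eᵗ` it becomes `(e^{2t} + 1) E(t) = 2 eᵗ`, i.e. `∑ⱼ C(n,j) 2ʲ E_{n-j} + Eₙ = 2`. Isolating
`j = 0` and `j = 1` shows that `Eₙ` is odd for even `n`. Subtracting the identity at `n` and at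
`n + M`, `M = 2ᵐ k`, expresses `2 (Eₙ - E_{n+M})` as a sum over `j ≥ 1`. By strong induction on
`n`, using `v₂ C(M,d) ≥ m - v₂ d`, every summand is divisible by `2^{m+2}` except the one with
`j = 2`, which is `≡ -2M`.
-/

open Finset

section BinomialTransform

variable {R : Type*} [CommRing R]

/-- The sequence whose exponential generating function is `e^{xt}` times that of `a`. -/
def binomialTransform (x : R) (a : ℕ → R) (n : ℕ) : R :=
  ∑ j ∈ range (n + 1), (n.choose j : R) * x ^ j * a (n - j)

@[simp]
theorem binomialTransform_zero_left (a : ℕ → R) : binomialTransform 0 a = a := by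
  ext n
  simp [binomialTransform, sum_range_succ']

theorem binomialTransform_add_right (x : R) (a b : ℕ → R) :
    binomialTransform x (a + b) = binomialTransform x a + binomialTransform x b := by
  ext n
  simp only [binomialTransform, Pi.add_apply, mul_add, sum_add_distrib]

theorem binomialTransform_binomialTransform (x y : R) (a : ℕ → R) :
    binomialTransform y (binomialTransform x a) = binomialTransform (x + y) a := by
  ext n
  let f j i := (n.choose j : R) * y ^ j * ((n - j).choose i * x ^ i * a (n - j - i))
  calc ∑ j ∈ range (n + 1), (n.choose j : R) * y ^ j * binomialTransform x a (n - j)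
      = ∑ j ∈ range (n + 1), ∑ i ∈ range (n + 1 - j), f j i := by
        refine sum_congr rfl fun j hj => ?_
        rw [binomialTransform, mul_sum, Nat.sub_add_comm (mem_range_succ_iff.mp hj)]
    _ = ∑ t ∈ range (n + 1), ∑ j ∈ range (t + 1), f j (t - j) := (sum_range_diag_flip _ _).symm
    _ = ∑ t ∈ range (n + 1), (n.choose t : R) * (x + y) ^ t * a (n - t) := by
        refine sum_congr rfl fun t ht => ?_
        rw [add_comm x, add_pow, mul_sum, sum_mul]
        refine sum_congr rfl fun j hj => ?_
        have hjt := mem_range_succ_iff.mp hj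
        have htn := mem_range_succ_iff.mp ht
        have hchoose : (n.choose j : R) * (n - j).choose (t - j) = n.choose t * t.choose j := by
          exact_mod_cast congrArg (Nat.cast : ℕ → R) (Nat.choose_mul (n := n) hjt).symm
        simp only [f, show n - j - (t - j) = n - t by omega]
        linear_combination (y ^ j * x ^ (t - j) * a (n - t)) * hchoose

theorem binomialTransform_neg_left (x : R) {a : ℕ → R}
    (ha : ∀ n, Odd n → a n = 0) (n : ℕ) :
    binomialTransform (-x) a n = (-1) ^ n * binomialTransform x a n := by
  rw [binomialTransform, binomialTransform, mul_sum]
  refine sum_congr rfl fun j hj => ?_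
  rcases Nat.even_or_odd (n - j) with h | h
  · have hsign : (-1 : R) ^ n = (-1) ^ j := by
      rw [← Nat.sub_add_cancel (mem_range_succ_iff.mp hj), pow_add, h.neg_one_pow, one_mul]
    rw [hsign, neg_pow]
    ring
  · simp [ha _ h]

end BinomialTransform

theorem eulerE_zero : eulerE 0 = 1 := by
  rw [eulerE]

theorem eulerE_of_odd {n : ℕ} (hn : Odd n) : eulerE n = 0 := by
  match n, hn with
  | 1, _ => rw [eulerE]
  | n + 2, hn => rw [eulerE, if_neg (by simpa [Nat.even_add] using Nat.not_even_iff_odd.mpr hn)]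

theorem Finset.sum_range_two_mul_add_one_of_odd {M : Type*} [AddCommMonoid M] {f : ℕ → M}
    (hf : ∀ j, Odd j → f j = 0) (t : ℕ) :
    ∑ j ∈ range (2 * t + 1), f j = ∑ r ∈ range (t + 1), f (2 * r) := by
  induction t with
  | zero => simp
  | succ t ih =>
    rw [show 2 * (t + 1) + 1 = 2 * t + 1 + 1 + 1 by ring, sum_range_succ, sum_range_succ, ih,
      hf _ (odd_two_mul_add_one t), add_zero, sum_range_succ _ (t + 1)]
    rfl

theorem sum_choose_mul_eulerE_s11 {n : ℕ} (hn : Even n) (h0 : n ≠ 0) :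
    ∑ j ∈ range (n + 1), (n.choose j : ℤ) * eulerE j = 0 := by
  obtain ⟨t, rfl⟩ : ∃ t, n = 2 * t + 2 := ⟨n / 2 - 1, by obtain ⟨r, rfl⟩ := hn; omega⟩
  have hdef : eulerE (2 * t + 2)
      = -∑ r ∈ range (t + 1), ((2 * t + 2).choose (2 * r) : ℤ) * eulerE (2 * r) := by
    rw [eulerE, if_pos (even_two_mul t), sum_attach (range (2 * t / 2 + 1))
      (fun r => ((2 * t + 2).choose (2 * r) : ℤ) * eulerE (2 * r)), show 2 * t / 2 = t by omega]
  rw [show 2 * t + 2 + 1 = 2 * (t + 1) + 1 by ring,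
    sum_range_two_mul_add_one_of_odd (fun j hj => by rw [eulerE_of_odd hj, mul_zero]),
    sum_range_succ, show 2 * (t + 1) = 2 * t + 2 by ring, hdef, Nat.choose_self]
  push_cast
  ring

theorem binomialTransform_one_eulerE {n : ℕ} (hn : Even n) (h0 : n ≠ 0) :
    binomialTransform 1 eulerE n = 0 := by
  rw [binomialTransform, ← sum_choose_mul_eulerE_s11 hn h0, ← sum_range_reflect]
  refine sum_congr rfl fun j hj => ?_
  have hjn := mem_range_succ_iff.mp hj
  rw [one_pow, mul_one, Nat.add_sub_cancel, Nat.choose_symm hjn, Nat.sub_sub_self hjn]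

theorem binomialTransform_one_add_neg_one_eulerE :
    binomialTransform 1 eulerE + binomialTransform (-1) eulerE = Pi.single 0 2 := by
  ext n
  rw [Pi.add_apply, binomialTransform_neg_left 1 (fun _ => eulerE_of_odd), ← one_add_mul]
  rcases Nat.even_or_odd n with hn | hn
  · rcases eq_or_ne n 0 with rfl | h0
    · simp [binomialTransform, eulerE_zero]
    · simp [binomialTransform_one_eulerE hn h0, h0]
  · simp [hn.neg_one_pow, hn.pos.ne']

theorem binomialTransform_two_eulerE_add_eulerE (n : ℕ) :
    binomialTransform 2 eulerE n + eulerE n = 2 := by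
  have h := congrFun (congrArg (binomialTransform 1) binomialTransform_one_add_neg_one_eulerE) n
  rw [binomialTransform_add_right, binomialTransform_binomialTransform,
    binomialTransform_binomialTransform, neg_add_cancel, one_add_one_eq_two,
    binomialTransform_zero_left, Pi.add_apply] at h
  rw [h, binomialTransform, sum_eq_single n (fun j hj hjn => ?_) (by simp)]
  · simp
  · rw [Pi.single_eq_of_ne (by have := mem_range_succ_iff.mp hj; omega), mul_zero]

theorem two_mul_eulerE_add_sum {n L : ℕ} (hL : n ≤ L) :
    2 * eulerE n + ∑ j ∈ range L, (n.choose (j + 1) : ℤ) * 2 ^ (j + 1) * eulerE (n - (j + 1))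
      = 2 := by
  obtain ⟨d, rfl⟩ := Nat.exists_eq_add_of_le hL
  have h := binomialTransform_two_eulerE_add_eulerE n
  rw [binomialTransform, sum_range_succ'] at h
  rw [sum_range_add, sum_eq_zero (s := range d) fun j _ => by
    rw [Nat.choose_eq_zero_of_lt (by omega), Nat.cast_zero, zero_mul, zero_mul]]
  simp only [Nat.choose_zero_right, Nat.cast_one, pow_zero, Nat.sub_zero, one_mul] at h
  linarith

theorem odd_eulerE {n : ℕ} (hn : Even n) : Odd (eulerE n) := by
  rcases eq_or_ne n 0 with rfl | h0
  · simp [eulerE_zero]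
  have h4 :
      (4 : ℤ) ∣ ∑ j ∈ range n, (n.choose (j + 1) : ℤ) * 2 ^ (j + 1) * eulerE (n - (j + 1)) := by
    refine dvd_sum fun j _ => ?_
    rcases eq_or_ne j 0 with rfl | hj
    · rw [zero_add, eulerE_of_odd (Nat.Even.sub_odd (by omega) hn odd_one), mul_zero]
      exact dvd_zero 4
    · exact Dvd.dvd.mul_right (Dvd.dvd.mul_left (pow_dvd_pow 2 (by omega : 2 ≤ j + 1)) _) _
  obtain ⟨c, hc⟩ := h4
  have h := two_mul_eulerE_add_sum (le_refl n)
  exact ⟨-c, by linarith⟩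

theorem Nat.pow_succ_dvd_of_pow_add_dvd_mul {p a b d x : ℕ} (hp : p.Prime) (hd : d ≠ 0)
    (hdb : d < p ^ b) (h : p ^ (a + b) ∣ d * x) : p ^ (a + 1) ∣ x := by
  obtain ⟨e, u, hpu, rfl⟩ := Nat.exists_eq_pow_mul_and_not_dvd hd p hp.ne_one
  have heb : e < b := (Nat.pow_lt_pow_iff_right hp.one_lt).mp
    ((Nat.le_mul_of_pos_right _ (Nat.pos_of_ne_zero (right_ne_zero_of_mul hd))).trans_lt hdb)
  have hux : p ^ (a + b - e) ∣ u * x := by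
    rw [show a + b = e + (a + b - e) by omega, pow_add, mul_assoc] at h
    exact Nat.dvd_of_mul_dvd_mul_left (pow_pos hp.pos e) h
  have hcop : (p ^ (a + b - e)).Coprime u := ((Nat.Prime.coprime_iff_not_dvd hp).mpr hpu).pow_left _
  exact (pow_dvd_pow p (by omega)).trans (hcop.dvd_of_dvd_mul_left hux)

theorem Nat.dvd_mul_choose (n d : ℕ) : n ∣ d * n.choose d := by
  rcases d with _ | d
  · simp
  rcases n with _ | n
  · simp
  exact ⟨n.choose d, by rw [Nat.add_one_mul_choose_eq, mul_comm]⟩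

theorem Nat.pow_succ_dvd_choose_mul_pow {p m k d j : ℕ} (hp : p.Prime) (hd : d ≠ 0)
    (hdj : d < p ^ j) : p ^ (m + 1) ∣ (p ^ m * k).choose d * p ^ j := by
  refine Nat.pow_succ_dvd_of_pow_add_dvd_mul hp hd hdj ?_
  rw [pow_add, ← mul_assoc]
  exact mul_dvd_mul ((dvd_mul_right _ k).trans (Nat.dvd_mul_choose _ d)) dvd_rfl

def eulerShiftTerm (n M j : ℕ) : ℤ :=
  (((n + M).choose j : ℤ) * eulerE (n + M - j) - n.choose j * eulerE (n - j)) * 2 ^ j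

theorem two_mul_eulerE_sub_eulerE_add (n M : ℕ) :
    2 * (eulerE n - eulerE (n + M)) = ∑ j ∈ range (n + M), eulerShiftTerm n M (j + 1) := by
  have hN := two_mul_eulerE_add_sum (le_refl (n + M))
  have hn := two_mul_eulerE_add_sum (Nat.le_add_right n M)
  have hsum : ∑ j ∈ range (n + M), eulerShiftTerm n M (j + 1)
      = ∑ j ∈ range (n + M), ((n + M).choose (j + 1) : ℤ) * 2 ^ (j + 1) * eulerE (n + M - (j + 1))
        - ∑ j ∈ range (n + M), (n.choose (j + 1) : ℤ) * 2 ^ (j + 1) * eulerE (n - (j + 1)) := by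
    rw [← sum_sub_distrib]
    exact sum_congr rfl fun j _ => by rw [eulerShiftTerm]; ring
  linarith

theorem eulerShiftTerm_eq (n M j : ℕ) :
    eulerShiftTerm n M j = (n.choose j : ℤ) * (eulerE (n + M - j) - eulerE (n - j)) * 2 ^ j
      + (((n + M).choose j : ℤ) - n.choose j) * 2 ^ j * eulerE (n + M - j) := by
  rw [eulerShiftTerm]
  ring

theorem choose_mul_eulerE_sub_of_odd {n j : ℕ} (hn : Even n) (hj : Odd j) :
    (n.choose j : ℤ) * eulerE (n - j) = 0 := by
  rcases le_or_gt j n with hjn | hnj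
  · rw [eulerE_of_odd (Nat.Even.sub_odd hjn hn hj), mul_zero]
  · rw [Nat.choose_eq_zero_of_lt hnj, Nat.cast_zero, zero_mul]

theorem eulerShiftTerm_of_odd {n M j : ℕ} (hn : Even n) (hM : Even M) (hj : Odd j) :
    eulerShiftTerm n M j = 0 := by
  rw [eulerShiftTerm, choose_mul_eulerE_sub_of_odd (hn.add hM) hj,
    choose_mul_eulerE_sub_of_odd hn hj, sub_zero, zero_mul]

theorem two_pow_dvd_choose_add_sub_choose_mul (n m k : ℕ) {j : ℕ} (hj : 3 ≤ j) :
    (2 : ℤ) ^ (m + 2) ∣ (((n + 2 ^ m * k).choose j : ℤ) - n.choose j) * 2 ^ j := by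
  obtain ⟨i, rfl⟩ : ∃ i, j = i + 1 := ⟨j - 1, by omega⟩
  have hvandermonde : ((n + 2 ^ m * k).choose (i + 1) : ℤ) - n.choose (i + 1)
      = ∑ p ∈ antidiagonal i, ((2 ^ m * k).choose (p.1 + 1) : ℤ) * n.choose p.2 := by
    rw [add_comm n, Nat.add_choose_eq, Nat.sum_antidiagonal_succ, Nat.choose_zero_right, one_mul]
    push_cast
    ring
  rw [hvandermonde, sum_mul]
  refine dvd_sum fun p hp => ?_
  have hpi : p.1 + 1 < 2 ^ i := by
    have := Nat.lt_two_pow_self (n := i - 2)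
    rw [show i = i - 2 + 2 by omega, pow_add]
    have := mem_antidiagonal.mp hp
    omega
  obtain ⟨c, hc⟩ := Nat.pow_succ_dvd_choose_mul_pow (k := k) (m := m) Nat.prime_two
    (Nat.succ_ne_zero p.1) hpi
  have hc' : ((2 ^ m * k).choose (p.1 + 1) : ℤ) * 2 ^ i = 2 ^ (m + 1) * c := by exact_mod_cast hc
  exact ⟨c * n.choose p.2, by linear_combination (2 * (n.choose p.2 : ℤ)) * hc'⟩

theorem two_pow_dvd_choose_mul_eulerE_sub {n m k j : ℕ} (hn : Even n) (hj : Even j) (hj2 : 2 ≤ j)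
    (ih : ∀ i < n, Even i → eulerE (i + 2 ^ m * k) ≡ eulerE i [ZMOD 2 ^ m]) :
    (2 : ℤ) ^ (m + 2) ∣
      (n.choose j : ℤ) * (eulerE (n + 2 ^ m * k - j) - eulerE (n - j)) * 2 ^ j := by
  rcases le_or_gt j n with hjn | hnj
  · have hi := ih (n - j) (by omega) ((Nat.even_sub hjn).mpr (iff_of_true hn hj))
    rw [show n + 2 ^ m * k - j = n - j + 2 ^ m * k by omega, pow_add]
    exact mul_dvd_mul (hi.symm.dvd.mul_left _) (pow_dvd_pow 2 hj2)
  · simp [Nat.choose_eq_zero_of_lt hnj]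

theorem two_pow_dvd_eulerShiftTerm {n m k j : ℕ} (hn : Even n) (hj : Even j) (hj3 : 3 ≤ j)
    (ih : ∀ i < n, Even i → eulerE (i + 2 ^ m * k) ≡ eulerE i [ZMOD 2 ^ m]) :
    (2 : ℤ) ^ (m + 2) ∣ eulerShiftTerm n (2 ^ m * k) j := by
  rw [eulerShiftTerm_eq]
  exact dvd_add (two_pow_dvd_choose_mul_eulerE_sub hn hj (by omega) ih)
    ((two_pow_dvd_choose_add_sub_choose_mul n m k hj3).mul_right _)

theorem two_pow_dvd_eulerShiftTerm_two_add {n m k : ℕ} (hm : 0 < m) (hn : Even n)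
    (ih : ∀ i < n, Even i → eulerE (i + 2 ^ m * k) ≡ eulerE i [ZMOD 2 ^ m]) :
    (2 : ℤ) ^ (m + 2) ∣ eulerShiftTerm n (2 ^ m * k) 2 + 2 * (2 ^ m * k) := by
  rw [eulerShiftTerm_eq, add_assoc]
  refine dvd_add (two_pow_dvd_choose_mul_eulerE_sub hn even_two le_rfl ih) ?_
  have hchoose : (((n + 2 ^ m * k).choose 2 : ℤ) - n.choose 2) * 2 ^ 2
      = 2 * (2 ^ m * k) * (2 * n + 2 ^ m * k - 1) := by
    have hN := Nat.cast_choose_two ℚ (n + 2 ^ m * k)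
    have hn := Nat.cast_choose_two ℚ n
    qify
    rw [hN, hn]
    push_cast
    ring
  have hodd : Odd ((2 * n + 2 ^ m * k - 1 : ℤ) * eulerE (n + 2 ^ m * k - 2)) := by
    obtain ⟨r, hr⟩ := (Nat.even_pow.mpr ⟨even_two, hm.ne'⟩).mul_right k
    obtain ⟨s, rfl⟩ := hn
    have hr' : (2 : ℤ) ^ m * k = r + r := by exact_mod_cast hr
    exact Odd.mul ⟨s + s + r - 1, by push_cast; linarith⟩ (odd_eulerE ⟨s + r - 1, by omega⟩)
  obtain ⟨w, hw⟩ := hodd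
  refine ⟨k * (w + 1), ?_⟩
  linear_combination eulerE (n + 2 ^ m * k - 2) * hchoose + (2 * 2 ^ m * (k : ℤ)) * hw

theorem eulerE_add_two_pow_mul_modEq {m k : ℕ} (hm : 0 < m) (hk : 0 < k) {n : ℕ} (hn : Even n) :
    eulerE (n + 2 ^ m * k) ≡ eulerE n + 2 ^ m * k [ZMOD 2 ^ (m + 1)] := by
  induction n using Nat.strong_induction_on with
  | _ n ih =>
  have ih' : ∀ i < n, Even i → eulerE (i + 2 ^ m * k) ≡ eulerE i [ZMOD 2 ^ m] := by
    intro i hi hie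
    have h := ih i hi hie
    rw [pow_succ] at h
    exact (h.of_mul_right 2).trans (Int.modEq_iff_dvd.mpr ⟨-k, by ring⟩)
  have hM : Even (2 ^ m * k) := (Nat.even_pow.mpr ⟨even_two, hm.ne'⟩).mul_right k
  have hterm : ∀ j ∈ (range (n + 2 ^ m * k)).erase 1,
      (2 : ℤ) ^ (m + 2) ∣ eulerShiftTerm n (2 ^ m * k) (j + 1) := by
    intro j hj
    rcases Nat.even_or_odd (j + 1) with he | ho
    · have hj1 := ne_of_mem_erase hj
      obtain ⟨r, hr⟩ := he
      exact two_pow_dvd_eulerShiftTerm hn ⟨r, hr⟩ (by omega) ih'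
    · rw [eulerShiftTerm_of_odd hn hM ho]
      exact dvd_zero _
  have h1 : 1 ∈ range (n + 2 ^ m * k) := by
    have := (Nat.le_self_pow hm.ne' 2).trans (Nat.le_mul_of_pos_right _ hk)
    rw [mem_range]
    omega
  have hsum : (2 : ℤ) ^ (m + 2) ∣ 2 * (eulerE n + 2 ^ m * k - eulerE (n + 2 ^ m * k)) := by
    rw [show 2 * (eulerE n + 2 ^ m * k - eulerE (n + 2 ^ m * k))
        = 2 * (eulerE n - eulerE (n + 2 ^ m * k)) + 2 * (2 ^ m * k) by ring,
      two_mul_eulerE_sub_eulerE_add, ← add_sum_erase _ _ h1, add_right_comm]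
    exact dvd_add (two_pow_dvd_eulerShiftTerm_two_add hm hn ih') (dvd_sum hterm)
  rw [pow_succ'] at hsum
  exact Int.modEq_iff_dvd.mpr ((mul_dvd_mul_iff_left two_ne_zero).mp hsum)

theorem stern_congruence (b k m : ℕ) (hb : Even b) (hk : 0 < k) (hm : 0 < m) :
    eulerE (2 ^ m * k + b) ≡ eulerE b + 2 ^ m * k [ZMOD 2 ^ (m + 1)] := by
  rw [add_comm (2 ^ m * k)]
  exact eulerE_add_two_pow_mul_modEq hm hk hb
end

section
/- Let b be a nonnegative even integer. Then (3^{b+1} + 1)/4 · E_b ≡ 40b^2 - 84b + 1 (mod 2^{9}). -/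
open Finset

theorem sum_range_choose_filter_modEq_two {m : ℕ} (hm : m ≠ 0) (p : ℕ) :
    ∑ i ∈ range (m + 1) with i ≡ p [MOD 2], m.choose i = 2 ^ (m - 1) := by
  have hsplit : ∀ i, 2 * (if i ≡ p [MOD 2] then (m.choose i : ℤ) else 0) =
      m.choose i + (-1) ^ p * ((-1) ^ i * m.choose i) := by
    intro i
    rcases Nat.even_or_odd i with hi | hi <;> rcases Nat.even_or_odd p with hp | hp <;>
      rw [hi.neg_one_pow, hp.neg_one_pow] <;>
      simp only [Nat.even_iff, Nat.odd_iff] at hi hp <;>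
      simp only [Nat.ModEq, hi, hp, zero_ne_one, one_ne_zero, ↓reduceIte] <;> ring
  have hdouble :
      2 * ∑ i ∈ range (m + 1) with i ≡ p [MOD 2], (m.choose i : ℤ) = 2 * 2 ^ (m - 1) := by
    rw [sum_filter, mul_sum]
    simp_rw [hsplit]
    rw [sum_add_distrib, ← mul_sum, Int.alternating_sum_range_choose_of_ne hm, mul_zero, add_zero,
      ← pow_succ', Nat.sub_add_cancel (Nat.one_le_iff_ne_zero.mpr hm)]
    exact_mod_cast Nat.sum_range_choose m
  exact_mod_cast mul_left_cancel₀ two_ne_zero hdouble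

theorem sum_range_choose_two_mul_mul_choose {n j : ℕ} (hj : j < 2 * n) :
    ∑ r ∈ range (n + 1), (2 * n).choose (2 * r) * (2 * r).choose j =
      (2 * n).choose j * 2 ^ (2 * n - 1 - j) :=
  calc ∑ r ∈ range (n + 1), (2 * n).choose (2 * r) * (2 * r).choose j
      = ∑ r ∈ range (n + 1) with j ≤ 2 * r,
          (2 * n).choose j * (2 * n - j).choose (2 * r - j) := by
        rw [sum_filter]
        refine sum_congr rfl fun r _ => ?_
        split_ifs with hr
        · exact Nat.choose_mul hr
        · rw [Nat.choose_eq_zero_of_lt (not_le.mp hr), mul_zero]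
    _ = (2 * n).choose j *
          ∑ i ∈ range (2 * n - j + 1) with i ≡ j [MOD 2], (2 * n - j).choose i := by
        rw [← mul_sum]
        congr 1
        refine sum_nbij' (fun r => 2 * r - j) (fun i => (i + j) / 2) ?_ ?_ ?_ ?_
          fun _ _ => rfl <;>
          intro x hx <;> simp only [mem_filter, mem_range] at hx ⊢ <;> unfold Nat.ModEq at * <;>
          omega
    _ = (2 * n).choose j * 2 ^ (2 * n - 1 - j) := by
        rw [sum_range_choose_filter_modEq_two (by omega), Nat.sub_right_comm]

theorem two_pow_dvd_sum_range_choose_two_mul_mul_descFactorial {n j k : ℕ}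
    (h : j + k < 2 * n) :
    2 ^ k ∣ ∑ r ∈ range (n + 1), (2 * n).choose (2 * r) * (2 * r).descFactorial j := by
  simp_rw [Nat.descFactorial_eq_factorial_mul_choose, mul_left_comm _ j.factorial, ← mul_sum,
    sum_range_choose_two_mul_mul_choose (by omega : j < 2 * n)]
  exact Dvd.dvd.mul_left (Dvd.dvd.mul_left (pow_dvd_pow 2 (by omega)) _) _

theorem sum_range_choose_two_mul_mul_eulerE {n : ℕ} (hn : n ≠ 0) :
    ∑ r ∈ range (n + 1), ((2 * n).choose (2 * r) : ℤ) * eulerE (2 * r) = 0 := by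
  obtain ⟨k, rfl⟩ := Nat.exists_eq_add_one_of_ne_zero hn
  have hE : eulerE (2 * k + 2) =
      -∑ r ∈ range (k + 1), ((2 * k + 2).choose (2 * r) : ℤ) * eulerE (2 * r) := by
    rw [eulerE, if_pos (even_two_mul k), Nat.mul_div_cancel_left k two_pos,
      sum_attach (range (k + 1)) fun r => ((2 * k + 2).choose (2 * r) : ℤ) * eulerE (2 * r)]
  rw [sum_range_succ, Nat.choose_self, Nat.cast_one, one_mul, mul_add_one, hE, add_neg_cancel]

theorem eulerE_two_mul_modEq_of_sum_modEq {m : ℤ} {f : ℕ → ℤ} {N : ℕ} (hN : N ≠ 0)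
    (hsmall : ∀ n < N, eulerE (2 * n) ≡ f n [ZMOD m])
    (hsum : ∀ n ≥ N,
      ∑ r ∈ range (n + 1), ((2 * n).choose (2 * r) : ℤ) * f r ≡ 0 [ZMOD m])
    (n : ℕ) : eulerE (2 * n) ≡ f n [ZMOD m] := by
  refine Nat.strong_induction_on n fun n ih => ?_
  rcases lt_or_ge n N with hn | hn
  · exact hsmall n hn
  have hE := sum_range_choose_two_mul_mul_eulerE (show n ≠ 0 by omega)
  have hf := hsum n hn
  rw [sum_range_succ, Nat.choose_self, Nat.cast_one, one_mul] at hE hf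
  have hpartial : ∑ r ∈ range n, ((2 * n).choose (2 * r) : ℤ) * eulerE (2 * r) ≡
      ∑ r ∈ range n, ((2 * n).choose (2 * r) : ℤ) * f r [ZMOD m] :=
    Int.ModEq.sum fun r hr => (ih r (mem_range.mp hr)).mul_left _
  calc eulerE (2 * n) = 0 - ∑ r ∈ range n, ((2 * n).choose (2 * r) : ℤ) * eulerE (2 * r) := by
        linear_combination hE
    _ ≡ (∑ r ∈ range n, ((2 * n).choose (2 * r) : ℤ) * f r + f n) -
        ∑ r ∈ range n, ((2 * n).choose (2 * r) : ℤ) * f r [ZMOD m] := hf.symm.sub hpartial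
    _ = f n := by ring

/-- Newton form of the quintic that agrees with `E_0, E_2, …, E_14` modulo `2^9`. -/
def eulerApprox {R : Type*} [CommRing R] (b : R) : R :=
  1 + 283 * b - 28 * b * (b - 1) + 10 * b * (b - 1) * (b - 2)
    + 21 * b * (b - 1) * (b - 2) * (b - 3) + 47 * b * (b - 1) * (b - 2) * (b - 3) * (b - 4)

theorem eulerApprox_natCast (b : ℕ) :
    eulerApprox (b : ℤ) =
      ∑ j : Fin 6, ![1, 283, -28, 10, 21, 47] j * (b.descFactorial j : ℤ) := by
  simp only [← descPochhammer_eval_eq_descFactorial, Fin.sum_univ_succ, Fin.val_succ,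
    Fin.val_zero, descPochhammer_succ_eval, descPochhammer_zero, Polynomial.eval_one, eulerApprox,
    Matrix.cons_val_zero, Matrix.cons_val_succ, univ_eq_empty, sum_empty]
  ring

theorem sum_range_choose_two_mul_mul_eulerApprox_modEq {n : ℕ} (hn : 8 ≤ n) :
    ∑ r ∈ range (n + 1), ((2 * n).choose (2 * r) : ℤ) * eulerApprox ((2 * r : ℕ) : ℤ) ≡
      0 [ZMOD 2 ^ 9] := by
  simp_rw [eulerApprox_natCast, mul_sum,
    mul_left_comm _ (![1, 283, -28, 10, 21, 47] _ : ℤ)]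
  rw [sum_comm]
  refine Int.ModEq.sum_zero fun j _ => Int.modEq_zero_iff_dvd.mpr ?_
  rw [← mul_sum]
  refine Dvd.dvd.mul_left ?_ _
  exact_mod_cast two_pow_dvd_sum_range_choose_two_mul_mul_descFactorial (by omega)

theorem eulerE_two_mul_modEq_eulerApprox (n : ℕ) :
    eulerE (2 * n) ≡ eulerApprox ((2 * n : ℕ) : ℤ) [ZMOD 2 ^ 9] :=
  eulerE_two_mul_modEq_of_sum_modEq (N := 8) (by norm_num) (by decide +kernel)
    (fun _ hn => sum_range_choose_two_mul_mul_eulerApprox_modEq hn) n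

/-- Binomial expansion of `3 (1 + 8)^n + 1` modulo `2^11`, divided by `4`. -/
def scaleApprox {R : Type*} [CommRing R] (n : R) : R :=
  1 + 6 * n + 24 * n * (n - 1) + 64 * n * (n - 1) * (n - 2)

theorem three_pow_two_mul_add_one_add_one_modEq (n : ℕ) :
    3 ^ (2 * n + 1) + 1 ≡ 4 * scaleApprox (n : ℤ) [ZMOD 2 ^ 11] := by
  induction n with
  | zero => decide
  | succ n ih =>
    calc (3 : ℤ) ^ (2 * (n + 1) + 1) + 1 = 9 * (3 ^ (2 * n + 1) + 1) - 8 := by ring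
      _ ≡ 9 * (4 * scaleApprox (n : ℤ)) - 8 [ZMOD 2 ^ 11] := (ih.mul_left 9).sub_right 8
      _ = 4 * scaleApprox ((n + 1 : ℕ) : ℤ) + 2 ^ 11 * (n * (n - 1) * (n - 2)) := by
        push_cast [scaleApprox]
        ring
      _ ≡ 4 * scaleApprox ((n + 1 : ℕ) : ℤ) [ZMOD 2 ^ 11] := Int.modEq_add_fac_self

theorem three_pow_two_mul_add_one_add_one_div_four_modEq (n : ℕ) :
    (3 ^ (2 * n + 1) + 1 : ℤ) / 4 ≡ scaleApprox (n : ℤ) [ZMOD 2 ^ 9] := by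
  obtain ⟨m, hm⟩ := (three_pow_two_mul_add_one_add_one_modEq n).symm.dvd
  rw [show (3 ^ (2 * n + 1) + 1 : ℤ) = 4 * (scaleApprox (n : ℤ) + 2 ^ 9 * m) by
      linear_combination hm,
    Int.mul_ediv_cancel_left _ four_ne_zero]
  exact Int.modEq_add_fac_self

theorem scaleApprox_mul_eulerApprox_two_mul (y : ZMod (2 ^ 9)) :
    scaleApprox y * eulerApprox (2 * y) = 40 * (2 * y) ^ 2 - 84 * (2 * y) + 1 := by
  revert y
  decide +kernel

theorem scaled_eulerE_mod_512 (b : ℕ) (hb : Even b) :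
    ((3 ^ (b + 1) + 1 : ℤ) / 4) * eulerE b ≡
      40 * (b : ℤ) ^ 2 - 84 * b + 1 [ZMOD 2 ^ 9] := by
  obtain ⟨n, rfl⟩ := hb
  rw [← two_mul]
  refine ((three_pow_two_mul_add_one_add_one_div_four_modEq n).mul
    (eulerE_two_mul_modEq_eulerApprox n)).trans ?_
  have h := scaleApprox_mul_eulerApprox_two_mul n
  rw [show (2 : ℤ) ^ 9 = ((2 ^ 9 : ℕ) : ℤ) by norm_num, ← ZMod.intCast_eq_intCast_iff]
  simp only [scaleApprox, eulerApprox] at h ⊢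
  push_cast
  exact h
end
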